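/- arXiv:1403.5369 — 2 statements merged into one kernel-verified Lean document; each statement's English description precedes it below -/
import Mathlib

section
/- Let W ⊂ ℤ³ be a finite set, let m, n ∈ W be non-parallel (neither is a real scalar multiple of the other), and let δ ∈ ℝ³ be a unit vector with ⟨δ, m⟩ = ⟨δ, n⟩ = 0. Then the four vector fields x ↦ δ·cos⟨m+n, x⟩, x ↦ δ·cos⟨m−n, x⟩, x ↦ δ·sin⟨m+n, x⟩ and x ↦ δ·sin⟨m−n, x⟩ all belong to E₁(W) = F(E(W)). -/
open MeasureTheory Set

noncomputable section

/-- Vector fields on `ℝ³`, with `ℝ³ = Fin 3 → ℝ`. -/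
abbrev V3 := Fin 3 → ℝ

/-- The Euclidean inner product on `ℝ³`. -/
def dot3 (a b : V3) : ℝ := ∑ i, a i * b i

/-- Embedding of `ℤ³` into `ℝ³`. -/
def toR (m : Fin 3 → ℤ) : V3 := fun i => (m i : ℝ)

/-- `2π`-periodic vector field. -/
def PerField (v : V3 → V3) : Prop :=
  ∀ (x : V3) (k : Fin 3 → ℤ), v (x + (2 * Real.pi) • toR k) = v x

/-- `2π`-periodic scalar function. -/
def PerFun (p : V3 → ℝ) : Prop :=
  ∀ (x : V3) (k : Fin 3 → ℤ), p (x + (2 * Real.pi) • toR k) = p x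

/-- The fundamental cell `[0,2π]³`. -/
def Box3 : Set V3 := Set.univ.pi fun _ => Icc (0 : ℝ) (2 * Real.pi)

/-- Divergence-free vector field. -/
def DivFree3 (v : V3 → V3) : Prop :=
  ∀ x, (∑ i, fderiv ℝ v x (Pi.single i 1) i) = 0

/-- Zero mean over the fundamental cell. -/
def ZeroMean3 (v : V3 → V3) : Prop := (∫ x in Box3, v x) = 0

/-- Smooth periodic divergence-free zero-mean vector field. -/
def GoodField (v : V3 → V3) : Prop :=
  ContDiff ℝ (⊤ : ℕ∞) v ∧ PerField v ∧ DivFree3 v ∧ ZeroMean3 v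

/-- The gradient of a scalar function. -/
def grad3 (p : V3 → ℝ) (x : V3) : V3 := fun i => fderiv ℝ p x (Pi.single i 1)

/-- The convective term `⟨u,∇⟩u`, i.e. `x ↦ (Du)(x) (u x)`. -/
def convTerm (u : V3 → V3) (x : V3) : V3 := fderiv ℝ u x (u x)

/-- `w` is the Leray projection `B(u)` of the convective term `⟨u,∇⟩u`: it is a smooth
periodic divergence-free zero-mean field with `⟨u,∇⟩u − w = ∇p` for some smooth
periodic `p`. -/
def IsLeray (u w : V3 → V3) : Prop :=
  GoodField w ∧ ∃ p : V3 → ℝ, ContDiff ℝ (⊤ : ℕ∞) p ∧ PerFun p ∧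
    ∀ x, convTerm u x - w x = grad3 p x

/-- The map `B` (defined by choice; for smooth periodic divergence-free zero-mean `u`
the Leray projection exists and is unique, and `Bop u` is it). -/
def Bop (u : V3 → V3) : V3 → V3 :=
  haveI := Classical.propDecidable (∃ w, IsLeray u w)
  if h : ∃ w, IsLeray u w then h.choose else 0

/-- Orthogonal projection of `ℝ³` onto `ℓ^⊥` (and `0` for `ℓ = 0`). -/
def proj3 (ℓ : V3) (v : V3) : V3 :=
  if ℓ = 0 then 0 else v - (dot3 v ℓ / dot3 ℓ ℓ) • ℓ

/-- The space `E(K)` of trigonometric divergence-free fields with frequencies in `K`: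
finite sums `x ↦ Σ_{ℓ} (a_ℓ cos⟨ℓ,x⟩ + b_ℓ sin⟨ℓ,x⟩)` with `ℓ ∈ K`, `a_ℓ, b_ℓ ⊥ ℓ`. -/
def EK (K : Set (Fin 3 → ℤ)) : Set (V3 → V3) :=
  {v | ∃ (S : Finset (Fin 3 → ℤ)) (a b : (Fin 3 → ℤ) → V3),
    ↑S ⊆ K ∧
    (∀ ℓ ∈ S, dot3 (a ℓ) (toR ℓ) = 0 ∧ dot3 (b ℓ) (toR ℓ) = 0) ∧
    v = fun x => ∑ ℓ ∈ S,
      (Real.cos (dot3 (toR ℓ) x) • a ℓ + Real.sin (dot3 (toR ℓ) x) • b ℓ)}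

/-- The set of fields of the form `η − Σᵢ B(ζⁱ)` with `η, ζⁱ ∈ E`. -/
def Sform (E : Set (V3 → V3)) : Set (V3 → V3) :=
  {η₁ | ∃ (p : ℕ) (η : V3 → V3) (ζ : Fin p → V3 → V3),
    η ∈ E ∧ (∀ i, ζ i ∈ E) ∧ η₁ = η - ∑ i, Bop (ζ i)}

/-- `F(E)`: the largest vector space all of whose elements can be written
`η − Σᵢ B(ζⁱ)` with `η, ζⁱ ∈ E`. -/
def Fop (E : Set (V3 → V3)) : Set (V3 → V3) :=
  {x | ∃ F : Submodule ℝ (V3 → V3), (F : Set (V3 → V3)) ⊆ Sform E ∧ x ∈ F}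

/-- The spaces `E₀(K) = E(K)`, `E_j(K) = F(E_{j−1}(K))`. -/
def Ej (K : Set (Fin 3 → ℤ)) : ℕ → Set (V3 → V3)
  | 0 => EK K
  | j + 1 => Fop (Ej K j)

/-- `E_∞(K) = ⋃_{j≥1} E_j(K)`. -/
def Einf (K : Set (Fin 3 → ℤ)) : Set (V3 → V3) := ⋃ j : ℕ, Ej K (j + 1)

/-- Two integer vectors are non-parallel if neither is a real multiple of the other. -/
def NonParallel (m n : Fin 3 → ℤ) : Prop :=
  (¬ ∃ c : ℝ, toR m = c • toR n) ∧ (¬ ∃ c : ℝ, toR n = c • toR m)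


def lin3 (c : V3) : V3 →L[ℝ] ℝ := ∑ i, c i • ContinuousLinearMap.proj i
lemma lin3_apply (c x : V3) : lin3 c x = dot3 c x := by
  simp [lin3, dot3, ContinuousLinearMap.sum_apply, mul_comm]
lemma dot3_comm (a b : V3) : dot3 a b = dot3 b a := by simp [dot3, mul_comm]
lemma dot3_add_right (c x y : V3) : dot3 c (x + y) = dot3 c x + dot3 c y := by
  simp [dot3, mul_add, Finset.sum_add_distrib]
lemma dot3_smul_right (c : V3) (s : ℝ) (y : V3) : dot3 c (s • y) = s * dot3 c y := by
  simp [dot3, Finset.mul_sum]; exact Finset.sum_congr rfl fun i _ => by ring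
lemma dot3_smul_left (c : V3) (s : ℝ) (y : V3) : dot3 (s • c) y = s * dot3 c y := by
  simp [dot3, Finset.mul_sum]; exact Finset.sum_congr rfl fun i _ => by ring
lemma dot3_single (c : V3) (i : Fin 3) : dot3 c (Pi.single i 1) = c i := by
  simp [dot3, Pi.single_apply]
lemma dot3_self_nonneg (c : V3) : 0 ≤ dot3 c c := Finset.sum_nonneg fun i _ => mul_self_nonneg _
lemma dot3_self_eq_zero {c : V3} (h : dot3 c c = 0) : c = 0 := by
  funext i
  have := (Finset.sum_eq_zero_iff_of_nonneg (fun i _ => mul_self_nonneg (c i))).mp h i (Finset.mem_univ i)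
  simpa [mul_self_eq_zero] using this

lemma dot3_toR_add (m n : Fin 3 → ℤ) (x : V3) :
    dot3 (toR (m + n)) x = dot3 (toR m) x + dot3 (toR n) x := by
  simp [dot3, toR, add_mul, Finset.sum_add_distrib]
lemma dot3_toR_sub (m n : Fin 3 → ℤ) (x : V3) :
    dot3 (toR (m - n)) x = dot3 (toR m) x - dot3 (toR n) x := by
  simp [dot3, toR, sub_mul, Finset.sum_sub_distrib]
lemma dot3_toR_int (ℓ k : Fin 3 → ℤ) :
    dot3 (toR ℓ) (toR k) = ((∑ i, ℓ i * k i : ℤ) : ℝ) := by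
  push_cast [dot3, toR]; rfl
lemma toR_eq_zero {ℓ : Fin 3 → ℤ} (h : toR ℓ = 0) : ℓ = 0 := by
  funext i; have := congrFun h i
  simpa [toR] using this

/-- basic "phase" function. -/
def ph (c : V3) (θ : ℝ) (x : V3) : ℝ := dot3 c x + θ

lemma hasFDerivAt_ph (c : V3) (θ : ℝ) (x : V3) : HasFDerivAt (ph c θ) (lin3 c) x := by
  have : (ph c θ) = fun x => lin3 c x + θ := by funext y; simp [ph, lin3_apply]
  rw [this]
  simpa using ((lin3 c).hasFDerivAt (x := x)).add_const θ

lemma contDiff_ph (c : V3) (θ : ℝ) : ContDiff ℝ (⊤ : ℕ∞) (ph c θ) := by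
  have : (ph c θ) = fun x => lin3 c x + θ := by funext y; simp [ph, lin3_apply]
  rw [this]
  exact (lin3 c).contDiff.add contDiff_const

lemma ph_period (ℓ k : Fin 3 → ℤ) (θ : ℝ) (x : V3) :
    ph (toR ℓ) θ (x + (2 * Real.pi) • toR k) =
      ph (toR ℓ) θ x + (∑ i, ℓ i * k i : ℤ) * (2 * Real.pi) := by
  simp [ph, dot3_add_right, dot3_smul_right, dot3_toR_int]; ring

/-- The basic mode field: `x ↦ (r ⬝ cos(⟨c,x⟩+θ)) • e`. -/
def Md (r : ℝ) (c : V3) (θ : ℝ) (e : V3) : V3 → V3 := fun x => (r * Real.cos (ph c θ x)) • e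

lemma hasFDerivAt_Md (r : ℝ) (c : V3) (θ : ℝ) (e : V3) (x : V3) :
    HasFDerivAt (Md r c θ e) (((-(r * Real.sin (ph c θ x))) • lin3 c).smulRight e) x := by
  have h1 : HasFDerivAt (fun y => r * Real.cos (ph c θ y))
      ((-(r * Real.sin (ph c θ x))) • lin3 c) x := by
    have := ((Real.hasDerivAt_cos (ph c θ x)).comp_hasFDerivAt x (hasFDerivAt_ph c θ x)).const_mul r
    refine this.congr_fderiv ?_
    ext y; simp [ContinuousLinearMap.smul_apply]; ring
  exact h1.smul_const e

lemma fderiv_Md_apply (r : ℝ) (c : V3) (θ : ℝ) (e : V3) (x u : V3) :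
    fderiv ℝ (Md r c θ e) x u = (-(r * Real.sin (ph c θ x)) * dot3 c u) • e := by
  rw [(hasFDerivAt_Md r c θ e x).fderiv]
  simp [ContinuousLinearMap.smulRight_apply, lin3_apply]

lemma contDiff_Md (r : ℝ) (c : V3) (θ : ℝ) (e : V3) : ContDiff ℝ (⊤ : ℕ∞) (Md r c θ e) :=
  ((contDiff_const.mul (Real.contDiff_cos.comp (contDiff_ph c θ))).smul contDiff_const)

lemma perField_Md (r : ℝ) (ℓ : Fin 3 → ℤ) (θ : ℝ) (e : V3) : PerField (Md r (toR ℓ) θ e) := by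
  intro x k
  simp only [Md, ph_period]
  rw [Real.cos_add_int_mul_two_pi]

lemma insertNth_shift (i : Fin 3) (t s : ℝ) (y : Fin 2 → ℝ) :
    i.insertNth (t + s) y = i.insertNth t y + s • toR (Pi.single i 1) := by
  funext j
  rcases eq_or_ne j i with rfl | hj
  · simp [toR]
  · obtain ⟨j', rfl⟩ := Fin.exists_succAbove_eq hj
    simp [toR, Pi.single_apply, Fin.succAbove_ne i j']

/-- integral of the divergence of a smooth periodic field over a period box vanishes. -/
lemma integral_div_zero_of_periodic (F : V3 → V3) (F' : V3 → V3 →L[ℝ] V3)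
    (hF : ∀ x, HasFDerivAt F (F' x) x) (hper : PerField F)
    (hdc : Continuous fun x => ∑ i, F' x (Pi.single i 1) i) (c : V3) :
    ∫ x in Icc c (fun i => c i + 2 * Real.pi), ∑ i, F' x (Pi.single i 1) i = 0 := by
  have hcont : Continuous F := by
    have : Differentiable ℝ F := fun x => (hF x).differentiableAt
    exact this.continuous
  have hle : c ≤ fun i => c i + 2 * Real.pi := by
    intro i
    have := Real.pi_pos
    simp only []
    linarith
  have H := MeasureTheory.integral_divergence_of_hasFDerivAt_off_countable
    (a := c) (b := fun i => c i + 2 * Real.pi) hle F F' ∅ Set.countable_empty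
    hcont.continuousOn (fun x _ => hF x)
    ((hdc.continuousOn).integrableOn_compact isCompact_Icc)
  rw [H]
  apply Finset.sum_eq_zero
  intro i _
  have key : ∀ y : Fin 2 → ℝ,
      F (i.insertNth (c i + 2 * Real.pi) y) i = F (i.insertNth (c i) y) i := by
    intro y
    rw [insertNth_shift, hper]
  simp only [key]
  exact sub_self _

lemma div_Md (r : ℝ) (c : V3) (θ : ℝ) (e : V3) (x : V3) :
    ∑ i, fderiv ℝ (Md r c θ e) x (Pi.single i 1) i
      = -(r * Real.sin (ph c θ x)) * dot3 c e := by
  simp only [fderiv_Md_apply, dot3_single, Pi.smul_apply, smul_eq_mul]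
  rw [dot3, Finset.mul_sum]
  exact Finset.sum_congr rfl fun i _ => by ring

lemma Box3_eq : Box3 = Icc (0:V3) (fun i => (0:V3) i + 2 * Real.pi) := by
  rw [← pi_univ_Icc]; simp [Box3]

lemma measurableSet_Box3 : MeasurableSet Box3 := by
  rw [Box3_eq]; exact measurableSet_Icc

lemma integral_cos_ph_zero (ℓ : Fin 3 → ℤ) (hℓ : ℓ ≠ 0) (θ : ℝ) :
    ∫ x in Box3, Real.cos (ph (toR ℓ) θ x) = 0 := by
  have hL : dot3 (toR ℓ) (toR ℓ) ≠ 0 := fun h => hℓ (toR_eq_zero (dot3_self_eq_zero h))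
  set L := dot3 (toR ℓ) (toR ℓ) with hLdef
  set F := Md (-(1/L)) (toR ℓ) (θ + Real.pi/2) (toR ℓ) with hF
  have hdiv : ∀ x, (∑ i, fderiv ℝ F x (Pi.single i 1) i) = Real.cos (ph (toR ℓ) θ x) := by
    intro x
    rw [hF, div_Md]
    have h1 : ph (toR ℓ) (θ + Real.pi/2) x = ph (toR ℓ) θ x + Real.pi/2 := by
      simp [ph]; ring
    rw [h1, Real.sin_add_pi_div_two, ← hLdef]
    field_simp
  have hdc : Continuous fun x => ∑ i, fderiv ℝ F x (Pi.single i 1) i :=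
    (Real.continuous_cos.comp (contDiff_ph (toR ℓ) θ).continuous).congr
      fun x => (hdiv x).symm
  have H := integral_div_zero_of_periodic F (fun x => fderiv ℝ F x)
    (fun x => (hasFDerivAt_Md _ _ _ _ x).differentiableAt.hasFDerivAt)
    (perField_Md _ _ _ _) hdc 0
  rw [← Box3_eq] at H
  rw [← H]
  exact setIntegral_congr_fun measurableSet_Box3 fun x _ => (hdiv x).symm

lemma integral_Md_zero (r : ℝ) (ℓ : Fin 3 → ℤ) (hℓ : ℓ ≠ 0) (θ : ℝ) (e : V3) :
    ZeroMean3 (Md r (toR ℓ) θ e) := by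
  unfold ZeroMean3 Md
  rw [integral_smul_const, integral_const_mul, integral_cos_ph_zero ℓ hℓ θ]
  simp

lemma goodField_Md (r : ℝ) (ℓ : Fin 3 → ℤ) (hℓ : ℓ ≠ 0) (θ : ℝ) (e : V3)
    (he : dot3 e (toR ℓ) = 0) : GoodField (Md r (toR ℓ) θ e) := by
  refine ⟨contDiff_Md _ _ _ _, perField_Md _ _ _ _, ?_, integral_Md_zero r ℓ hℓ θ e⟩
  intro x
  rw [div_Md, dot3_comm _ e, he, mul_zero]

lemma GoodField.add' {u v : V3 → V3} (hu : GoodField u) (hv : GoodField v) :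
    GoodField (fun x => u x + v x) := by
  obtain ⟨hu1, hu2, hu3, hu4⟩ := hu
  obtain ⟨hv1, hv2, hv3, hv4⟩ := hv
  refine ⟨hu1.add hv1, fun x k => by simp [hu2 x k, hv2 x k], ?_, ?_⟩
  · intro x
    have hd : fderiv ℝ (fun x => u x + v x) x = fderiv ℝ u x + fderiv ℝ v x :=
      (((hu1.differentiable (by simp)) x).hasFDerivAt.add
        ((hv1.differentiable (by simp)) x).hasFDerivAt).fderiv
    simp only [hd, ContinuousLinearMap.add_apply, Pi.add_apply, Finset.sum_add_distrib,
      hu3 x, hv3 x, add_zero]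
  · unfold ZeroMean3
    have hcompact : IsCompact Box3 := by
      rw [Box3_eq]; exact isCompact_Icc
    rw [integral_add ((hu1.continuous.continuousOn).integrableOn_compact hcompact)
        ((hv1.continuous.continuousOn).integrableOn_compact hcompact), hu4, hv4, add_zero]

lemma zero_of_box_integrals (g : V3 → ℝ) (hg : Continuous g) (hnn : ∀ x, 0 ≤ g x)
    (hint : ∀ c : V3, (∫ x in Icc c (fun i => c i + 2 * Real.pi), g x) = 0) :
    ∀ x, g x = 0 := by
  intro x₀
  by_contra hne
  set c : V3 := fun i => x₀ i - Real.pi with hc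
  set d : V3 := fun i => c i + 2 * Real.pi with hd
  set U : Set V3 := Set.univ.pi fun i => Ioo (c i) (d i) with hU
  have hUopen : IsOpen U := isOpen_set_pi finite_univ fun i _ => isOpen_Ioo
  have hUsub : U ⊆ Icc c d := by
    rw [← pi_univ_Icc]
    exact Set.pi_mono fun i _ => Ioo_subset_Icc_self
  have hx₀U : x₀ ∈ U := by
    intro i _
    constructor
    · simp [hc]; exact Real.pi_pos
    · simp [hc, hd]; nlinarith [Real.pi_pos]
  set S : Set V3 := {x | g x ≠ 0} with hS
  have hSopen : IsOpen S := IsOpen.preimage hg isOpen_compl_singleton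
  have hInt : IntegrableOn g (Icc c d) :=
    hg.continuousOn.integrableOn_compact isCompact_Icc
  have h0 : g =ᵐ[volume.restrict (Icc c d)] 0 :=
    (integral_eq_zero_iff_of_nonneg hnn hInt).mp (hint c)
  have hz : volume.restrict (Icc c d) S = 0 := by
    have := h0
    rw [Filter.EventuallyEq, Filter.eventually_iff, mem_ae_iff] at this
    convert this using 2
    ext x; simp [hS]
  rw [Measure.restrict_apply hSopen.measurableSet] at hz
  have hpos : 0 < volume (S ∩ U) :=
    (hSopen.inter hUopen).measure_pos volume ⟨x₀, hne, hx₀U⟩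
  have : volume (S ∩ U) ≤ volume (S ∩ Icc c d) :=
    measure_mono (inter_subset_inter_right _ hUsub)
  rw [hz] at this
  exact absurd (le_antisymm this zero_le) (ne_of_gt hpos)

lemma grad_zero_of (q : V3 → ℝ) (hq : ContDiff ℝ (⊤ : ℕ∞) q) (hqper : PerFun q)
    (v : V3 → V3) (hvq : ∀ x, v x = grad3 q x) (hv : ContDiff ℝ (⊤ : ℕ∞) v)
    (hvper : PerField v) (hdiv : DivFree3 v) : ∀ x, v x = 0 := by
  have hqd : Differentiable ℝ q := hq.differentiable (by simp)
  have hvd : Differentiable ℝ v := hv.differentiable (by simp)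
  set F : V3 → V3 := fun x => q x • v x with hFdef
  set F' : V3 → V3 →L[ℝ] V3 :=
    fun x => q x • fderiv ℝ v x + (fderiv ℝ q x).smulRight (v x) with hF'def
  have hF : ∀ x, HasFDerivAt F (F' x) x :=
    fun x => (hqd x).hasFDerivAt.smul (hvd x).hasFDerivAt
  have hdivF : ∀ x, (∑ i, F' x (Pi.single i 1) i) = ∑ i, (v x i)^2 := by
    intro x
    have hgrad : ∀ i, fderiv ℝ q x (Pi.single i 1) = v x i := by
      intro i; rw [hvq x]; rfl
    simp only [hF'def, ContinuousLinearMap.add_apply, Pi.add_apply,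
      ContinuousLinearMap.coe_smul', Pi.smul_apply, ContinuousLinearMap.smulRight_apply,
      smul_eq_mul, Finset.sum_add_distrib]
    rw [← Finset.mul_sum, hdiv x, mul_zero, zero_add]
    exact Finset.sum_congr rfl fun i _ => by rw [hgrad i]; ring
  have hper : PerField F := by
    intro x k; simp only [hFdef, hqper x k, hvper x k]
  have hdc : Continuous fun x => ∑ i, F' x (Pi.single i 1) i := by
    have : Continuous fun x => ∑ i, (v x i)^2 :=
      continuous_finset_sum _ fun i _ => ((continuous_apply i).comp hv.continuous).pow 2
    exact this.congr fun x => (hdivF x).symm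
  have hint : ∀ c : V3, (∫ x in Icc c (fun i => c i + 2 * Real.pi), ∑ i, (v x i)^2) = 0 := by
    intro c
    have H := integral_div_zero_of_periodic F F' hF hper hdc c
    rw [← H]
    exact setIntegral_congr_fun measurableSet_Icc fun x _ => (hdivF x).symm
  have hzero := zero_of_box_integrals (fun x => ∑ i, (v x i)^2)
    (continuous_finset_sum _ fun i _ => ((continuous_apply i).comp hv.continuous).pow 2)
    (fun x => Finset.sum_nonneg fun i _ => sq_nonneg _) hint
  intro x
  funext i
  have h1 := hzero x
  have h2 := (Finset.sum_eq_zero_iff_of_nonneg fun i _ => sq_nonneg (v x i)).mp h1 i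
    (Finset.mem_univ i)
  exact (pow_eq_zero_iff two_ne_zero).mp h2

lemma leray_unique {u w1 w2 : V3 → V3} (h1 : IsLeray u w1) (h2 : IsLeray u w2) :
    w1 = w2 := by
  obtain ⟨hg1, p1, hp1, hp1per, he1⟩ := h1
  obtain ⟨hg2, p2, hp2, hp2per, he2⟩ := h2
  have hp1d : Differentiable ℝ p1 := hp1.differentiable (by simp)
  have hp2d : Differentiable ℝ p2 := hp2.differentiable (by simp)
  set q : V3 → ℝ := fun x => p1 x - p2 x with hqdef
  set v : V3 → V3 := fun x => w2 x - w1 x with hvdef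
  have hvq : ∀ x, v x = grad3 q x := by
    intro x
    have hd : fderiv ℝ q x = fderiv ℝ p1 x - fderiv ℝ p2 x :=
      fderiv_fun_sub (hp1d x) (hp2d x)
    funext i
    have e1 := congrFun (he1 x) i
    have e2 := congrFun (he2 x) i
    simp only [Pi.sub_apply] at e1 e2
    simp only [hvdef, grad3, Pi.sub_apply, hd, ContinuousLinearMap.sub_apply]
    have : w2 x i - w1 x i =
        (convTerm u x i - grad3 p2 x i) - (convTerm u x i - grad3 p1 x i) := by
      rw [show convTerm u x i - grad3 p2 x i = w2 x i by linarith [e2],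
          show convTerm u x i - grad3 p1 x i = w1 x i by linarith [e1]]
    rw [this]
    simp only [grad3]
    ring
  have hz := grad_zero_of q (hp1.sub hp2) (fun x k => by simp [hqdef, hp1per x k, hp2per x k])
    v hvq (hg2.1.sub hg1.1)
    (fun x k => by simp only [hvdef, hg1.2.1 x k, hg2.2.1 x k])
    ?_
  · funext x
    have := hz x
    simp only [hvdef] at this
    have := sub_eq_zero.mp this
    exact this.symm
  · intro x
    have hd : fderiv ℝ (fun x => w2 x - w1 x) x = fderiv ℝ w2 x - fderiv ℝ w1 x :=
      fderiv_fun_sub ((hg2.1.differentiable (by simp)) x)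
        ((hg1.1.differentiable (by simp)) x)
    simp only [hvdef, hd, ContinuousLinearMap.sub_apply, Pi.sub_apply,
      Finset.sum_sub_distrib, hg1.2.2.1 x, hg2.2.2.1 x, sub_zero]

lemma Bop_eq {u w : V3 → V3} (h : IsLeray u w) : Bop u = w := by
  have hex : ∃ w, IsLeray u w := ⟨w, h⟩
  unfold Bop
  rw [dif_pos hex]
  exact leray_unique hex.choose_spec h

lemma grad3_zero (x : V3) : grad3 (fun _ => (0:ℝ)) x = 0 := by
  funext i; simp [grad3]

lemma convTerm_zeta (m n : Fin 3 → ℤ) (δ b : V3) (hδm : dot3 δ (toR m) = 0)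
    (hδn : dot3 δ (toR n) = 0) (hbn : dot3 b (toR n) = 0) (φ ψ : ℝ) (x : V3) :
    convTerm (fun y => Md 1 (toR m) φ δ y + Md 1 (toR n) ψ b y) x
      = (-(dot3 (toR m) b) * (Real.sin (ph (toR m) φ x) * Real.cos (ph (toR n) ψ x))) • δ := by
  have hD : HasFDerivAt (fun y => Md 1 (toR m) φ δ y + Md 1 (toR n) ψ b y)
      ((((-(1 * Real.sin (ph (toR m) φ x))) • lin3 (toR m)).smulRight δ) +
       (((-(1 * Real.sin (ph (toR n) ψ x))) • lin3 (toR n)).smulRight b)) x :=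
    (hasFDerivAt_Md _ _ _ _ x).add (hasFDerivAt_Md _ _ _ _ x)
  unfold convTerm
  rw [hD.fderiv]
  have h1 : dot3 (toR m) (Md 1 (toR m) φ δ x + Md 1 (toR n) ψ b x)
      = Real.cos (ph (toR n) ψ x) * dot3 (toR m) b := by
    simp only [Md, dot3_add_right, dot3_smul_right]
    rw [dot3_comm (toR m) δ, hδm]
    ring
  have h2 : dot3 (toR n) (Md 1 (toR m) φ δ x + Md 1 (toR n) ψ b x) = 0 := by
    simp only [Md, dot3_add_right, dot3_smul_right]
    rw [dot3_comm (toR n) δ, hδn, dot3_comm (toR n) b, hbn]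
    ring
  simp only [ContinuousLinearMap.add_apply, ContinuousLinearMap.smulRight_apply,
    ContinuousLinearMap.coe_smul', Pi.smul_apply, smul_eq_mul, lin3_apply, h1, h2,
    mul_zero, zero_smul, add_zero]
  rw [show -(1 * Real.sin (ph (toR m) φ x)) * (Real.cos (ph (toR n) ψ x) * dot3 (toR m) b)
      = -(dot3 (toR m) b) * (Real.sin (ph (toR m) φ x) * Real.cos (ph (toR n) ψ x)) by ring]

lemma dot3_toR_add_left (m n : Fin 3 → ℤ) (e : V3) :
    dot3 e (toR (m + n)) = dot3 e (toR m) + dot3 e (toR n) := by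
  rw [dot3_comm, dot3_toR_add, dot3_comm (toR m), dot3_comm (toR n)]
lemma dot3_toR_sub_left (m n : Fin 3 → ℤ) (e : V3) :
    dot3 e (toR (m - n)) = dot3 e (toR m) - dot3 e (toR n) := by
  rw [dot3_comm, dot3_toR_sub, dot3_comm (toR m), dot3_comm (toR n)]

lemma Bop_zeta (m n : Fin 3 → ℤ) (hadd : m + n ≠ 0) (hsub : m - n ≠ 0)
    (δ b : V3) (hδm : dot3 δ (toR m) = 0) (hδn : dot3 δ (toR n) = 0)
    (hbn : dot3 b (toR n) = 0) (φ ψ : ℝ) :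
    Bop (fun y => Md 1 (toR m) φ δ y + Md 1 (toR n) ψ b y)
      = fun y => Md (-(dot3 (toR m) b)/2) (toR (m+n)) (φ+ψ-Real.pi/2) δ y
          + Md (-(dot3 (toR m) b)/2) (toR (m-n)) (φ-ψ-Real.pi/2) δ y := by
  apply Bop_eq
  constructor
  · exact GoodField.add'
      (goodField_Md _ _ hadd _ _ (by rw [dot3_toR_add_left, hδm, hδn, add_zero]))
      (goodField_Md _ _ hsub _ _ (by rw [dot3_toR_sub_left, hδm, hδn, sub_zero]))
  · refine ⟨fun _ => 0, contDiff_const, fun x k => rfl, ?_⟩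
    intro x
    rw [grad3_zero, convTerm_zeta m n δ b hδm hδn hbn φ ψ x]
    set a := ph (toR m) φ x
    set b' := ph (toR n) ψ x
    have hp1 : ph (toR (m+n)) (φ+ψ-Real.pi/2) x = (a + b') - Real.pi/2 := by
      simp only [ph, a, b', dot3_toR_add]; ring
    have hp2 : ph (toR (m-n)) (φ-ψ-Real.pi/2) x = (a - b') - Real.pi/2 := by
      simp only [ph, a, b', dot3_toR_sub]; ring
    simp only [Md, hp1, hp2, Real.cos_sub_pi_div_two, Real.sin_add, Real.sin_sub]
    rw [← add_smul, ← sub_smul]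
    rw [show -(dot3 (toR m) b) * (Real.sin a * Real.cos b')
        - (-(dot3 (toR m) b)/2 * (Real.sin a * Real.cos b' + Real.cos a * Real.sin b')
          + -(dot3 (toR m) b)/2 * (Real.sin a * Real.cos b' - Real.cos a * Real.sin b'))
        = 0 by ring]
    exact zero_smul _ _

lemma dot3_add_left (x y z : V3) : dot3 (x + y) z = dot3 x z + dot3 y z := by
  simp [dot3, add_mul, Finset.sum_add_distrib]
lemma dot3_sub_left (x y z : V3) : dot3 (x - y) z = dot3 x z - dot3 y z := by
  simp [dot3, sub_mul, Finset.sum_sub_distrib]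

lemma dot3_neg_left (x y : V3) : dot3 (-x) y = -dot3 x y := by
  simp [dot3, Finset.sum_neg_distrib]

lemma zero_mem_EK (K : Set (Fin 3 → ℤ)) : (0 : V3 → V3) ∈ EK K := by
  refine ⟨∅, fun _ => 0, fun _ => 0, by simp, by simp, ?_⟩
  funext x; simp

lemma zeta_mem_EK (W : Finset (Fin 3 → ℤ)) (m n : Fin 3 → ℤ) (hm : m ∈ W) (hn : n ∈ W)
    (hmn : m ≠ n) (δ b : V3) (hδm : dot3 δ (toR m) = 0) (hbn : dot3 b (toR n) = 0)
    (φ ψ : ℝ) :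
    (fun y => Md 1 (toR m) φ δ y + Md 1 (toR n) ψ b y) ∈ EK (↑W : Set (Fin 3 → ℤ)) := by
  refine ⟨{m, n}, (fun ℓ => if ℓ = m then Real.cos φ • δ else Real.cos ψ • b),
    (fun ℓ => if ℓ = m then (-Real.sin φ) • δ else (-Real.sin ψ) • b), ?_, ?_, ?_⟩
  · intro ℓ hℓ
    simp only [Finset.coe_insert, Finset.coe_singleton, mem_insert_iff, mem_singleton_iff] at hℓ
    rcases hℓ with rfl | rfl
    · exact hm
    · exact hn
  · intro ℓ hℓ
    rcases Finset.mem_insert.mp hℓ with rfl | hℓ'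
    · simp [dot3_neg_left, dot3_smul_left, hδm]
    · rw [Finset.mem_singleton] at hℓ'
      subst hℓ'
      simp [Ne.symm hmn, dot3_neg_left, dot3_smul_left, hbn]
  · funext x
    rw [Finset.sum_pair hmn]
    simp only [if_pos rfl, if_neg (Ne.symm hmn), eq_self_iff_true, if_true]
    simp only [Md, ph, Real.cos_add, smul_smul, one_mul]
    module

lemma toR_neg (n : Fin 3 → ℤ) : toR (-n) = -toR n := by
  funext i; simp [toR]

lemma exists_b (m n : Fin 3 → ℤ)
    (h1 : ¬ ∃ c : ℝ, toR m = c • toR n) (h2 : ¬ ∃ c : ℝ, toR n = c • toR m) (c : ℝ) :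
    ∃ b : V3, dot3 b (toR n) = 0 ∧ dot3 (toR m) b = c := by
  have hn0 : dot3 (toR n) (toR n) ≠ 0 := by
    intro h
    exact h2 ⟨0, by rw [dot3_self_eq_zero h]; simp⟩
  set lam := dot3 (toR m) (toR n) / dot3 (toR n) (toR n) with hlam
  set b₀ : V3 := toR m - lam • toR n with hb₀
  have hb₀n : dot3 b₀ (toR n) = 0 := by
    rw [hb₀, dot3_sub_left, dot3_smul_left, hlam]
    field_simp
    ring
  have hb₀0 : b₀ ≠ 0 := by
    intro h
    exact h1 ⟨lam, by rw [hb₀, sub_eq_zero] at h; exact h⟩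
  have hq0 : dot3 b₀ b₀ ≠ 0 := fun h => hb₀0 (dot3_self_eq_zero h)
  have hq : dot3 (toR m) b₀ = dot3 b₀ b₀ := by
    have : toR m = b₀ + lam • toR n := by rw [hb₀]; abel
    rw [this, dot3_add_left, dot3_smul_left, dot3_comm (toR n) b₀, hb₀n, mul_zero, add_zero]
  refine ⟨(c / dot3 b₀ b₀) • b₀, ?_, ?_⟩
  · rw [dot3_smul_left, hb₀n, mul_zero]
  · rw [dot3_smul_right, hq]
    field_simp

lemma Bop_zeta' (m n : Fin 3 → ℤ) (hadd : m + n ≠ 0) (hsub : m - n ≠ 0)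
    (δ b : V3) (hδm : dot3 δ (toR m) = 0) (hδn : dot3 δ (toR n) = 0)
    (hbn : dot3 b (toR n) = 0) (α β : ℝ) :
    Bop (fun y => Md 1 (toR m) ((α+β)/2+Real.pi/2) δ y + Md 1 (toR n) ((α-β)/2) b y)
      = fun y => Md (-(dot3 (toR m) b)/2) (toR (m+n)) α δ y
          + Md (-(dot3 (toR m) b)/2) (toR (m-n)) β δ y := by
  rw [Bop_zeta m n hadd hsub δ b hδm hδn hbn ((α+β)/2+Real.pi/2) ((α-β)/2)]
  rw [show (α+β)/2+Real.pi/2+((α-β)/2)-Real.pi/2 = α by ring,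
      show (α+β)/2+Real.pi/2-((α-β)/2)-Real.pi/2 = β by ring]

/-- Membership of the scaled generators in `Sform (EK W)`. -/
lemma smul_target_mem_Sform_plus (W : Finset (Fin 3 → ℤ)) (m n : Fin 3 → ℤ)
    (hm : m ∈ W) (hn : n ∈ W) (hpar : NonParallel m n)
    (δ : V3) (hδm : dot3 δ (toR m) = 0) (hδn : dot3 δ (toR n) = 0)
    (c θ : ℝ) :
    (fun x => Md c (toR (m + n)) θ δ x) ∈ Sform (EK (↑W : Set (Fin 3 → ℤ))) := by
  have hmn : m ≠ n := fun h => hpar.1 ⟨1, by rw [h, one_smul]⟩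
  have hadd : m + n ≠ 0 := by
    intro h
    exact hpar.1 ⟨-1, by
      have : m = -n := eq_neg_of_add_eq_zero_left h
      rw [this, toR_neg]; funext i; simp⟩
  have hsub : m - n ≠ 0 := fun h => hmn (sub_eq_zero.mp h)
  obtain ⟨b, hbn, hKb⟩ := exists_b m n hpar.1 hpar.2 c
  refine ⟨2, 0,
    ![fun y => Md 1 (toR m) ((θ+0)/2+Real.pi/2) δ y + Md 1 (toR n) ((θ-0)/2) b y,
      fun y => Md 1 (toR m) ((θ+Real.pi)/2+Real.pi/2) δ y + Md 1 (toR n) ((θ-Real.pi)/2) b y],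
    zero_mem_EK _, ?_, ?_⟩
  · intro i
    fin_cases i
    · exact zeta_mem_EK W m n hm hn hmn δ b hδm hbn _ _
    · exact zeta_mem_EK W m n hm hn hmn δ b hδm hbn _ _
  · rw [Fin.sum_univ_two]
    simp only [Matrix.cons_val_zero, Matrix.cons_val_one, Matrix.head_cons]
    rw [Bop_zeta' m n hadd hsub δ b hδm hδn hbn θ 0,
        Bop_zeta' m n hadd hsub δ b hδm hδn hbn θ Real.pi, hKb]
    funext x
    simp only [Pi.sub_apply, Pi.add_apply, Pi.zero_apply]
    simp only [Md, ph, add_zero, Real.cos_add_pi]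
    module

lemma smul_target_mem_Sform_minus (W : Finset (Fin 3 → ℤ)) (m n : Fin 3 → ℤ)
    (hm : m ∈ W) (hn : n ∈ W) (hpar : NonParallel m n)
    (δ : V3) (hδm : dot3 δ (toR m) = 0) (hδn : dot3 δ (toR n) = 0)
    (c θ : ℝ) :
    (fun x => Md c (toR (m - n)) θ δ x) ∈ Sform (EK (↑W : Set (Fin 3 → ℤ))) := by
  have hmn : m ≠ n := fun h => hpar.1 ⟨1, by rw [h, one_smul]⟩
  have hadd : m + n ≠ 0 := by
    intro h
    exact hpar.1 ⟨-1, by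
      have : m = -n := eq_neg_of_add_eq_zero_left h
      rw [this, toR_neg]; funext i; simp⟩
  have hsub : m - n ≠ 0 := fun h => hmn (sub_eq_zero.mp h)
  obtain ⟨b, hbn, hKb⟩ := exists_b m n hpar.1 hpar.2 c
  refine ⟨2, 0,
    ![fun y => Md 1 (toR m) ((0+θ)/2+Real.pi/2) δ y + Md 1 (toR n) ((0-θ)/2) b y,
      fun y => Md 1 (toR m) ((Real.pi+θ)/2+Real.pi/2) δ y + Md 1 (toR n) ((Real.pi-θ)/2) b y],
    zero_mem_EK _, ?_, ?_⟩
  · intro i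
    fin_cases i
    · exact zeta_mem_EK W m n hm hn hmn δ b hδm hbn _ _
    · exact zeta_mem_EK W m n hm hn hmn δ b hδm hbn _ _
  · rw [Fin.sum_univ_two]
    simp only [Matrix.cons_val_zero, Matrix.cons_val_one, Matrix.head_cons]
    rw [Bop_zeta' m n hadd hsub δ b hδm hδn hbn 0 θ,
        Bop_zeta' m n hadd hsub δ b hδm hδn hbn Real.pi θ, hKb]
    funext x
    simp only [Pi.sub_apply, Pi.add_apply, Pi.zero_apply]
    simp only [Md, ph, add_zero, Real.cos_add_pi]
    module

lemma target_mem_Fop_plus (W : Finset (Fin 3 → ℤ)) (m n : Fin 3 → ℤ)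
    (hm : m ∈ W) (hn : n ∈ W) (hpar : NonParallel m n)
    (δ : V3) (hδm : dot3 δ (toR m) = 0) (hδn : dot3 δ (toR n) = 0) (θ : ℝ) :
    (fun x => Md 1 (toR (m + n)) θ δ x) ∈ Fop (EK (↑W : Set (Fin 3 → ℤ))) := by
  set τ : V3 → V3 := fun x => Md 1 (toR (m + n)) θ δ x with hτ
  refine ⟨Submodule.span ℝ {τ}, ?_, Submodule.mem_span_singleton_self _⟩
  intro v hv
  obtain ⟨c, rfl⟩ := Submodule.mem_span_singleton.mp hv
  have hcτ : c • τ = fun x => Md c (toR (m + n)) θ δ x := by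
    funext x
    simp only [hτ, Pi.smul_apply, Md, smul_smul, one_mul]
  rw [hcτ]
  exact smul_target_mem_Sform_plus W m n hm hn hpar δ hδm hδn c θ

lemma target_mem_Fop_minus (W : Finset (Fin 3 → ℤ)) (m n : Fin 3 → ℤ)
    (hm : m ∈ W) (hn : n ∈ W) (hpar : NonParallel m n)
    (δ : V3) (hδm : dot3 δ (toR m) = 0) (hδn : dot3 δ (toR n) = 0) (θ : ℝ) :
    (fun x => Md 1 (toR (m - n)) θ δ x) ∈ Fop (EK (↑W : Set (Fin 3 → ℤ))) := by
  set τ : V3 → V3 := fun x => Md 1 (toR (m - n)) θ δ x with hτ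
  refine ⟨Submodule.span ℝ {τ}, ?_, Submodule.mem_span_singleton_self _⟩
  intro v hv
  obtain ⟨c, rfl⟩ := Submodule.mem_span_singleton.mp hv
  have hcτ : c • τ = fun x => Md c (toR (m - n)) θ δ x := by
    funext x
    simp only [hτ, Pi.smul_apply, Md, smul_smul, one_mul]
  rw [hcτ]
  exact smul_target_mem_Sform_minus W m n hm hn hpar δ hδm hδn c θ

/-- For a finite `W ⊂ ℤ³`, non-parallel `m, n ∈ W` and a unit vector
`δ ⊥ m, n`, the fields `δ cos⟨m±n,·⟩` and `δ sin⟨m±n,·⟩` belong to `E₁(W) = F(E(W))`. -/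
theorem delta_fields_mem_E1 (W : Finset (Fin 3 → ℤ)) (m n : Fin 3 → ℤ)
    (hm : m ∈ W) (hn : n ∈ W) (hpar : NonParallel m n)
    (δ : V3) (hδ : dot3 δ δ = 1)
    (hδm : dot3 δ (toR m) = 0) (hδn : dot3 δ (toR n) = 0) :
    (fun x => Real.cos (dot3 (toR (m + n)) x) • δ) ∈ Ej (↑W) 1 ∧
    (fun x => Real.cos (dot3 (toR (m - n)) x) • δ) ∈ Ej (↑W) 1 ∧
    (fun x => Real.sin (dot3 (toR (m + n)) x) • δ) ∈ Ej (↑W) 1 ∧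
    (fun x => Real.sin (dot3 (toR (m - n)) x) • δ) ∈ Ej (↑W) 1 := by
  have hEj : Ej (↑W : Set (Fin 3 → ℤ)) 1 = Fop (EK ↑W) := rfl
  have ecos : ∀ k : Fin 3 → ℤ, (fun x => Real.cos (dot3 (toR k) x) • δ)
      = fun x => Md 1 (toR k) 0 δ x := by
    intro k; funext x; simp [Md, ph]
  have esin : ∀ k : Fin 3 → ℤ, (fun x => Real.sin (dot3 (toR k) x) • δ)
      = fun x => Md 1 (toR k) (-(Real.pi/2)) δ x := by
    intro k; funext x
    simp only [Md, ph, one_mul, ← sub_eq_add_neg, Real.cos_sub_pi_div_two]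
  refine ⟨?_, ?_, ?_, ?_⟩
  · rw [hEj, ecos]
    exact target_mem_Fop_plus W m n hm hn hpar δ hδm hδn 0
  · rw [hEj, ecos]
    exact target_mem_Fop_minus W m n hm hn hpar δ hδm hδn 0
  · rw [hEj, esin]
    exact target_mem_Fop_plus W m n hm hn hpar δ hδm hδn (-(Real.pi/2))
  · rw [hEj, esin]
    exact target_mem_Fop_minus W m n hm hn hpar δ hδm hδn (-(Real.pi/2))
end
end

section
/- Let K ⊂ ℤ³ be a finite set and define K₁ := K ∪ {m + n : m, n ∈ K, m and n non-parallel} ∪ {m − n : m, n ∈ K, m and n non-parallel}. Then for every ζ ∈ E(K) one has B(ζ) ∈ E(K₁). -/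
open MeasureTheory Set

noncomputable section

-- chunk A: basic linear algebra & derivative helpers
namespace Helper

/-- dot3 as a continuous linear map in the second argument. -/
def dotCLM (w : V3) : V3 →L[ℝ] ℝ := ∑ i, (w i) • (ContinuousLinearMap.proj i)

@[simp] lemma dotCLM_apply (w x : V3) : dotCLM w x = dot3 w x := by
  simp [dotCLM, dot3, ContinuousLinearMap.sum_apply]

lemma dot3_comm (a b : V3) : dot3 a b = dot3 b a := by
  simp [dot3, mul_comm]

lemma dot3_add_left (a b c : V3) : dot3 (a + b) c = dot3 a c + dot3 b c := by
  simp [dot3, add_mul, Finset.sum_add_distrib]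

lemma dot3_sub_left (a b c : V3) : dot3 (a - b) c = dot3 a c - dot3 b c := by
  simp [dot3, sub_mul, Finset.sum_sub_distrib]

lemma dot3_smul_left (r : ℝ) (a c : V3) : dot3 (r • a) c = r * dot3 a c := by
  simp [dot3, Finset.mul_sum, mul_assoc]

lemma dot3_add_right (a b c : V3) : dot3 c (a + b) = dot3 c a + dot3 c b := by
  simp [dot3, mul_add, Finset.sum_add_distrib]

lemma dot3_smul_right (r : ℝ) (a c : V3) : dot3 c (r • a) = r * dot3 c a := by
  simp [dot3, Finset.mul_sum, mul_comm, mul_left_comm]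

lemma dot3_single (w : V3) (i : Fin 3) : dot3 w (Pi.single i 1) = w i := by
  simp [dot3, Pi.single_apply, mul_ite]

lemma toR_add (m n : Fin 3 → ℤ) : toR (m + n) = toR m + toR n := by
  funext i; simp [toR]

lemma toR_sub (m n : Fin 3 → ℤ) : toR (m - n) = toR m - toR n := by
  funext i; simp [toR]

lemma toR_zero : toR 0 = 0 := by funext i; simp [toR]

lemma toR_eq_zero {m : Fin 3 → ℤ} (h : toR m = 0) : m = 0 := by
  funext i
  have := congrFun h i
  simpa [toR] using this

lemma dot3_self_pos {v : V3} (h : v ≠ 0) : 0 < dot3 v v := by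
  rcases Function.ne_iff.1 h with ⟨i, hi⟩
  have : (0:ℝ) < v i * v i := by
    have := mul_self_pos.2 (by simpa using hi)
    simpa using this
  calc (0:ℝ) < v i * v i := this
    _ ≤ ∑ j, v j * v j := by
        apply Finset.single_le_sum (f := fun j => v j * v j)
        · intro j _; exact mul_self_nonneg _
        · simp

end Helper
namespace Helper

/-- A single vector-valued trigonometric mode. -/
def mode (ℓ : Fin 3 → ℤ) (a b : V3) : V3 → V3 :=
  fun x => Real.cos (dot3 (toR ℓ) x) • a + Real.sin (dot3 (toR ℓ) x) • b

/-- A single scalar trigonometric mode. -/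
def smode (ℓ : Fin 3 → ℤ) (r s : ℝ) : V3 → ℝ :=
  fun x => r * Real.cos (dot3 (toR ℓ) x) + s * Real.sin (dot3 (toR ℓ) x)

lemma hasFDerivAt_cosdot (ℓ : Fin 3 → ℤ) (x : V3) :
    HasFDerivAt (fun y => Real.cos (dot3 (toR ℓ) y))
      (-(Real.sin (dot3 (toR ℓ) x) • dotCLM (toR ℓ))) x := by
  have h1 : HasFDerivAt (fun y => dotCLM (toR ℓ) y) (dotCLM (toR ℓ)) x :=
    (dotCLM (toR ℓ)).hasFDerivAt
  have h2 := (Real.hasDerivAt_cos (dotCLM (toR ℓ) x)).comp_hasFDerivAt x h1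
  simpa [neg_smul, Function.comp_def] using h2

lemma hasFDerivAt_sindot (ℓ : Fin 3 → ℤ) (x : V3) :
    HasFDerivAt (fun y => Real.sin (dot3 (toR ℓ) y))
      ((Real.cos (dot3 (toR ℓ) x)) • dotCLM (toR ℓ)) x := by
  have h1 : HasFDerivAt (fun y => dotCLM (toR ℓ) y) (dotCLM (toR ℓ)) x :=
    (dotCLM (toR ℓ)).hasFDerivAt
  have h2 := (Real.hasDerivAt_sin (dotCLM (toR ℓ) x)).comp_hasFDerivAt x h1
  simpa [Function.comp_def] using h2

/-- The derivative of a vector mode. -/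
def dmode (ℓ : Fin 3 → ℤ) (a b : V3) (x : V3) : V3 →L[ℝ] V3 :=
  (-(Real.sin (dot3 (toR ℓ) x) • dotCLM (toR ℓ))).smulRight a
    + ((Real.cos (dot3 (toR ℓ) x)) • dotCLM (toR ℓ)).smulRight b

lemma dmode_apply (ℓ : Fin 3 → ℤ) (a b : V3) (x v : V3) :
    dmode ℓ a b x v = (-Real.sin (dot3 (toR ℓ) x) * dot3 (toR ℓ) v) • a
      + (Real.cos (dot3 (toR ℓ) x) * dot3 (toR ℓ) v) • b := by
  simp [dmode, ContinuousLinearMap.smulRight_apply]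

lemma hasFDerivAt_mode (ℓ : Fin 3 → ℤ) (a b : V3) (x : V3) :
    HasFDerivAt (mode ℓ a b) (dmode ℓ a b x) x := by
  have h1 := (hasFDerivAt_cosdot ℓ x).smul_const a
  have h2 := (hasFDerivAt_sindot ℓ x).smul_const b
  exact h1.add h2

/-- The derivative of a scalar mode. -/
def dsmode (ℓ : Fin 3 → ℤ) (r s : ℝ) (x : V3) : V3 →L[ℝ] ℝ :=
  (r * (-Real.sin (dot3 (toR ℓ) x)) + s * Real.cos (dot3 (toR ℓ) x)) • dotCLM (toR ℓ)

lemma hasFDerivAt_smode (ℓ : Fin 3 → ℤ) (r s : ℝ) (x : V3) :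
    HasFDerivAt (smode ℓ r s) (dsmode ℓ r s x) x := by
  have h1 := (hasFDerivAt_cosdot ℓ x).const_smul r
  have h2 := (hasFDerivAt_sindot ℓ x).const_smul s
  have h3 := h1.add h2
  have : ((r • fun y => Real.cos (dot3 (toR ℓ) y)) + s • fun y => Real.sin (dot3 (toR ℓ) y))
      = smode ℓ r s := by
    funext y; simp [smode]
  rw [this] at h3
  refine h3.congr_fderiv ?_
  ext v
  simp [dsmode]
  ring

lemma contDiff_mode (ℓ : Fin 3 → ℤ) (a b : V3) : ContDiff ℝ (⊤ : ℕ∞) (mode ℓ a b) := by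
  have hd : ContDiff ℝ (⊤ : ℕ∞) (fun y => dotCLM (toR ℓ) y) := (dotCLM (toR ℓ)).contDiff
  have h1 : ContDiff ℝ (⊤ : ℕ∞) (fun y => Real.cos (dot3 (toR ℓ) y)) := by
    have := Real.contDiff_cos.comp hd
    simpa [Function.comp_def] using this
  have h2 : ContDiff ℝ (⊤ : ℕ∞) (fun y => Real.sin (dot3 (toR ℓ) y)) := by
    have := Real.contDiff_sin.comp hd
    simpa [Function.comp_def] using this
  exact (h1.smul contDiff_const).add (h2.smul contDiff_const)

lemma contDiff_smode (ℓ : Fin 3 → ℤ) (r s : ℝ) : ContDiff ℝ (⊤ : ℕ∞) (smode ℓ r s) := by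
  have hd : ContDiff ℝ (⊤ : ℕ∞) (fun y => dotCLM (toR ℓ) y) := (dotCLM (toR ℓ)).contDiff
  have h1 : ContDiff ℝ (⊤ : ℕ∞) (fun y => Real.cos (dot3 (toR ℓ) y)) := by
    have := Real.contDiff_cos.comp hd
    simpa [Function.comp_def] using this
  have h2 : ContDiff ℝ (⊤ : ℕ∞) (fun y => Real.sin (dot3 (toR ℓ) y)) := by
    have := Real.contDiff_sin.comp hd
    simpa [Function.comp_def] using this
  exact (contDiff_const.mul h1).add (contDiff_const.mul h2)

/-- Shift of the phase by a lattice vector. -/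
lemma dot_shift (ℓ k : Fin 3 → ℤ) (x : V3) :
    dot3 (toR ℓ) (x + (2 * Real.pi) • toR k)
      = dot3 (toR ℓ) x + (∑ i, ℓ i * k i : ℤ) * (2 * Real.pi) := by
  rw [dot3_add_right, dot3_smul_right]
  have h : dot3 (toR ℓ) (toR k) = ((∑ i, ℓ i * k i : ℤ) : ℝ) := by
    push_cast
    simp [dot3, toR]
  rw [h]
  ring

lemma cos_shift (ℓ k : Fin 3 → ℤ) (x : V3) :
    Real.cos (dot3 (toR ℓ) (x + (2 * Real.pi) • toR k)) = Real.cos (dot3 (toR ℓ) x) := by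
  rw [dot_shift]
  exact Real.cos_add_int_mul_two_pi _ _

lemma sin_shift (ℓ k : Fin 3 → ℤ) (x : V3) :
    Real.sin (dot3 (toR ℓ) (x + (2 * Real.pi) • toR k)) = Real.sin (dot3 (toR ℓ) x) := by
  rw [dot_shift]
  exact Real.sin_add_int_mul_two_pi _ _

lemma perField_mode (ℓ : Fin 3 → ℤ) (a b : V3) : PerField (mode ℓ a b) := by
  intro x k
  simp only [mode, cos_shift, sin_shift]

lemma perFun_smode (ℓ : Fin 3 → ℤ) (r s : ℝ) : PerFun (smode ℓ r s) := by
  intro x k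
  simp only [smode, cos_shift, sin_shift]

end Helper
namespace Helper

/-- Finite sums of modes. -/
def eksum (S : Finset (Fin 3 → ℤ)) (a b : (Fin 3 → ℤ) → V3) : V3 → V3 :=
  fun x => ∑ ℓ ∈ S, mode ℓ (a ℓ) (b ℓ) x

lemma hasFDerivAt_eksum (S : Finset (Fin 3 → ℤ)) (a b : (Fin 3 → ℤ) → V3) (x : V3) :
    HasFDerivAt (eksum S a b) (∑ ℓ ∈ S, dmode ℓ (a ℓ) (b ℓ) x) x := by
  have := HasFDerivAt.sum (fun ℓ (_ : ℓ ∈ S) => hasFDerivAt_mode ℓ (a ℓ) (b ℓ) x)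
  simpa [eksum] using this

lemma contDiff_eksum (S : Finset (Fin 3 → ℤ)) (a b : (Fin 3 → ℤ) → V3) :
    ContDiff ℝ (⊤ : ℕ∞) (eksum S a b) := by
  have : ContDiff ℝ (⊤ : ℕ∞) (fun x => ∑ ℓ ∈ S, mode ℓ (a ℓ) (b ℓ) x) :=
    ContDiff.sum (fun ℓ _ => contDiff_mode ℓ (a ℓ) (b ℓ))
  exact this

lemma perField_eksum (S : Finset (Fin 3 → ℤ)) (a b : (Fin 3 → ℤ) → V3) :
    PerField (eksum S a b) := by
  intro x k
  simp only [eksum]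
  exact Finset.sum_congr rfl fun ℓ _ => perField_mode ℓ (a ℓ) (b ℓ) x k

lemma divFree_eksum (S : Finset (Fin 3 → ℤ)) (a b : (Fin 3 → ℤ) → V3)
    (h : ∀ ℓ ∈ S, dot3 (a ℓ) (toR ℓ) = 0 ∧ dot3 (b ℓ) (toR ℓ) = 0) :
    DivFree3 (eksum S a b) := by
  intro x
  rw [(hasFDerivAt_eksum S a b x).fderiv]
  have : ∀ i : Fin 3, (∑ ℓ ∈ S, dmode ℓ (a ℓ) (b ℓ) x) (Pi.single i 1)
      = ∑ ℓ ∈ S, dmode ℓ (a ℓ) (b ℓ) x (Pi.single i 1) := by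
    intro i; rw [ContinuousLinearMap.sum_apply]
  simp only [this, Finset.sum_apply]
  rw [Finset.sum_comm]
  apply Finset.sum_eq_zero
  intro ℓ hℓ
  have hsum : ∀ i : Fin 3, dmode ℓ (a ℓ) (b ℓ) x (Pi.single i 1) i
      = -Real.sin (dot3 (toR ℓ) x) * (toR ℓ i * a ℓ i)
        + Real.cos (dot3 (toR ℓ) x) * (toR ℓ i * b ℓ i) := by
    intro i
    rw [dmode_apply, dot3_single]
    simp [mul_comm, mul_assoc, mul_left_comm]
  simp only [hsum]
  rw [Finset.sum_add_distrib, ← Finset.mul_sum, ← Finset.mul_sum]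
  have ha : ∑ i, toR ℓ i * a ℓ i = 0 := by
    have := (h ℓ hℓ).1
    rw [dot3_comm] at this
    simpa [dot3] using this
  have hb : ∑ i, toR ℓ i * b ℓ i = 0 := by
    have := (h ℓ hℓ).2
    rw [dot3_comm] at this
    simpa [dot3] using this
  rw [ha, hb]; ring

lemma eksum_mem_EK {K : Set (Fin 3 → ℤ)} (S : Finset (Fin 3 → ℤ)) (a b : (Fin 3 → ℤ) → V3)
    (hS : ↑S ⊆ K) (h : ∀ ℓ ∈ S, dot3 (a ℓ) (toR ℓ) = 0 ∧ dot3 (b ℓ) (toR ℓ) = 0) :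
    eksum S a b ∈ EK K := ⟨S, a, b, hS, h, rfl⟩

lemma EK_zero (K : Set (Fin 3 → ℤ)) : (0 : V3 → V3) ∈ EK K := by
  refine ⟨∅, 0, 0, by simp, by simp, ?_⟩
  funext x; simp

lemma mode_mem_EK {K : Set (Fin 3 → ℤ)} {ℓ : Fin 3 → ℤ} {a b : V3}
    (hℓ : ℓ ∈ K) (ha : dot3 a (toR ℓ) = 0) (hb : dot3 b (toR ℓ) = 0) :
    mode ℓ a b ∈ EK K := by
  refine ⟨{ℓ}, fun _ => a, fun _ => b, by simpa using hℓ, by simp [ha, hb], ?_⟩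
  funext x; simp [mode]

lemma EK_add {K : Set (Fin 3 → ℤ)} {v w : V3 → V3} (hv : v ∈ EK K) (hw : w ∈ EK K) :
    v + w ∈ EK K := by
  obtain ⟨S₁, a₁, b₁, hS₁, h₁, rfl⟩ := hv
  obtain ⟨S₂, a₂, b₂, hS₂, h₂, rfl⟩ := hw
  classical
  refine ⟨S₁ ∪ S₂,
    (fun ℓ => (if ℓ ∈ S₁ then a₁ ℓ else 0) + (if ℓ ∈ S₂ then a₂ ℓ else 0)),
    (fun ℓ => (if ℓ ∈ S₁ then b₁ ℓ else 0) + (if ℓ ∈ S₂ then b₂ ℓ else 0)), ?_, ?_, ?_⟩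
  · intro ℓ hℓ
    rcases Finset.mem_union.1 (by simpa using hℓ) with h | h
    · exact hS₁ (by simpa using h)
    · exact hS₂ (by simpa using h)
  · intro ℓ hℓ
    constructor
    · rw [dot3_add_left]
      have e1 : dot3 (if ℓ ∈ S₁ then a₁ ℓ else 0) (toR ℓ) = 0 := by
        split
        · exact (h₁ ℓ ‹_›).1
        · simp [dot3]
      have e2 : dot3 (if ℓ ∈ S₂ then a₂ ℓ else 0) (toR ℓ) = 0 := by
        split
        · exact (h₂ ℓ ‹_›).1
        · simp [dot3]
      rw [e1, e2]; ring
    · rw [dot3_add_left]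
      have e1 : dot3 (if ℓ ∈ S₁ then b₁ ℓ else 0) (toR ℓ) = 0 := by
        split
        · exact (h₁ ℓ ‹_›).2
        · simp [dot3]
      have e2 : dot3 (if ℓ ∈ S₂ then b₂ ℓ else 0) (toR ℓ) = 0 := by
        split
        · exact (h₂ ℓ ‹_›).2
        · simp [dot3]
      rw [e1, e2]; ring
  · funext x
    have key : ∀ (S : Finset (Fin 3 → ℤ)) (a b : (Fin 3 → ℤ) → V3), S ⊆ S₁ ∪ S₂ →
        (∑ ℓ ∈ S₁ ∪ S₂, (Real.cos (dot3 (toR ℓ) x) • (if ℓ ∈ S then a ℓ else 0)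
          + Real.sin (dot3 (toR ℓ) x) • (if ℓ ∈ S then b ℓ else 0)))
        = ∑ ℓ ∈ S, (Real.cos (dot3 (toR ℓ) x) • a ℓ + Real.sin (dot3 (toR ℓ) x) • b ℓ) := by
      intro S a b hsub
      rw [← Finset.sum_subset hsub]
      · apply Finset.sum_congr rfl
        intro ℓ hℓ
        simp [hℓ]
      · intro ℓ _ hℓ
        simp [hℓ]
    have e : ∀ ℓ : Fin 3 → ℤ,
        Real.cos (dot3 (toR ℓ) x) • ((if ℓ ∈ S₁ then a₁ ℓ else 0) + (if ℓ ∈ S₂ then a₂ ℓ else 0))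
          + Real.sin (dot3 (toR ℓ) x) • ((if ℓ ∈ S₁ then b₁ ℓ else 0) + (if ℓ ∈ S₂ then b₂ ℓ else 0))
        = (Real.cos (dot3 (toR ℓ) x) • (if ℓ ∈ S₁ then a₁ ℓ else 0)
            + Real.sin (dot3 (toR ℓ) x) • (if ℓ ∈ S₁ then b₁ ℓ else 0))
          + (Real.cos (dot3 (toR ℓ) x) • (if ℓ ∈ S₂ then a₂ ℓ else 0)
            + Real.sin (dot3 (toR ℓ) x) • (if ℓ ∈ S₂ then b₂ ℓ else 0)) := by
      intro ℓ
      rw [smul_add, smul_add]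
      abel
    simp only [Pi.add_apply, e, Finset.sum_add_distrib,
      key S₁ a₁ b₁ Finset.subset_union_left, key S₂ a₂ b₂ Finset.subset_union_right]

lemma EK_perField {K : Set (Fin 3 → ℤ)} {v : V3 → V3} (hv : v ∈ EK K) : PerField v := by
  obtain ⟨S, a, b, _, _, rfl⟩ := hv
  exact perField_eksum S a b

lemma EK_contDiff {K : Set (Fin 3 → ℤ)} {v : V3 → V3} (hv : v ∈ EK K) :
    ContDiff ℝ (⊤ : ℕ∞) v := by
  obtain ⟨S, a, b, _, _, rfl⟩ := hv
  exact contDiff_eksum S a b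

lemma EK_divFree {K : Set (Fin 3 → ℤ)} {v : V3 → V3} (hv : v ∈ EK K) : DivFree3 v := by
  obtain ⟨S, a, b, _, h, rfl⟩ := hv
  exact divFree_eksum S a b h

end Helper
namespace Helper

lemma box3_eq : Box3 = Set.Icc (0 : V3) (fun _ => 2 * Real.pi) := by
  rw [← Set.pi_univ_Icc]
  rfl

lemma insertNth_shift (i : Fin 3) (y : Fin 2 → ℝ) :
    Fin.insertNth i (2 * Real.pi) y
      = Fin.insertNth i 0 y + (2 * Real.pi) • toR (Pi.single i 1) := by
  funext j
  rcases eq_or_ne j i with rfl | hj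
  · simp [toR]
  · obtain ⟨l, rfl⟩ := Fin.exists_succAbove_eq hj
    simp [toR, Pi.single_apply, Fin.succAbove_ne i l]

/-- Integral of the divergence of a smooth periodic field over the box vanishes. -/
lemma divergence_integral_zero (F : V3 → V3) (hF : ContDiff ℝ (⊤ : ℕ∞) F)
    (hper : PerField F) :
    (∫ x in Box3, ∑ i, fderiv ℝ F x (Pi.single i 1) i) = 0 := by
  have hle : (0 : V3) ≤ fun _ => 2 * Real.pi := by
    intro i; positivity
  have hcf : Continuous (fderiv ℝ F) := (hF.fderiv_right (m := (⊤:ℕ∞)) (by exact_mod_cast le_top)).continuous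
  have hgc : Continuous fun x => ∑ i, fderiv ℝ F x (Pi.single i 1) i := by
    apply continuous_finset_sum
    intro i _
    exact (continuous_apply i).comp (hcf.clm_apply continuous_const)
  have key := MeasureTheory.integral_divergence_of_hasFDerivAt_off_countable
    (0 : V3) (fun _ => 2 * Real.pi) hle F (fun x => fderiv ℝ F x) ∅ Set.countable_empty
    hF.continuous.continuousOn
    (fun x _ => (hF.differentiable (by simp) x).hasFDerivAt)
    (hgc.continuousOn.integrableOn_compact isCompact_Icc)
  rw [box3_eq, key]
  apply Finset.sum_eq_zero
  intro i _
  have hpt : ∀ y : Fin 2 → ℝ,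
      F (Fin.insertNth i ((fun _ => 2 * Real.pi : V3) i) y) i
        = F (Fin.insertNth i ((0 : V3) i) y) i := by
    intro y
    have h0 : ((0 : V3) i) = (0 : ℝ) := rfl
    have h1 : ((fun _ => 2 * Real.pi : V3) i) = 2 * Real.pi := rfl
    rw [h0, h1, insertNth_shift, hper]
  simp only [hpt, sub_self]

lemma integral_cos_zero (ℓ : Fin 3 → ℤ) (h : toR ℓ ≠ 0) :
    (∫ x in Box3, Real.cos (dot3 (toR ℓ) x)) = 0 := by
  set t := dot3 (toR ℓ) (toR ℓ) with ht
  have htpos : 0 < t := dot3_self_pos h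
  set F := mode ℓ 0 (t⁻¹ • toR ℓ) with hF
  have hdiv : ∀ x, (∑ i, fderiv ℝ F x (Pi.single i 1) i) = Real.cos (dot3 (toR ℓ) x) := by
    intro x
    have hd := (hasFDerivAt_mode ℓ 0 (t⁻¹ • toR ℓ) x).fderiv
    rw [hF, hd]
    have : ∀ i : Fin 3, dmode ℓ 0 (t⁻¹ • toR ℓ) x (Pi.single i 1) i
        = Real.cos (dot3 (toR ℓ) x) * t⁻¹ * (toR ℓ i * toR ℓ i) := by
      intro i
      rw [dmode_apply, dot3_single]
      simp [Pi.smul_apply]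
      ring
    simp only [this]
    rw [← Finset.mul_sum]
    have : (∑ i, toR ℓ i * toR ℓ i) = t := by simp [ht, dot3]
    rw [this]
    field_simp
  have := divergence_integral_zero F (contDiff_mode _ _ _) (perField_mode _ _ _)
  rw [show (fun x => ∑ i, fderiv ℝ F x (Pi.single i 1) i)
      = fun x => Real.cos (dot3 (toR ℓ) x) from funext hdiv] at this
  · exact this

lemma integral_sin_zero (ℓ : Fin 3 → ℤ) (h : toR ℓ ≠ 0) :
    (∫ x in Box3, Real.sin (dot3 (toR ℓ) x)) = 0 := by
  set t := dot3 (toR ℓ) (toR ℓ) with ht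
  have htpos : 0 < t := dot3_self_pos h
  set F := mode ℓ (-(t⁻¹ • toR ℓ)) 0 with hF
  have hdiv : ∀ x, (∑ i, fderiv ℝ F x (Pi.single i 1) i) = Real.sin (dot3 (toR ℓ) x) := by
    intro x
    have hd := (hasFDerivAt_mode ℓ (-(t⁻¹ • toR ℓ)) 0 x).fderiv
    rw [hF, hd]
    have : ∀ i : Fin 3, dmode ℓ (-(t⁻¹ • toR ℓ)) 0 x (Pi.single i 1) i
        = Real.sin (dot3 (toR ℓ) x) * t⁻¹ * (toR ℓ i * toR ℓ i) := by
      intro i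
      rw [dmode_apply, dot3_single]
      simp [Pi.smul_apply]
      ring
    simp only [this]
    rw [← Finset.mul_sum]
    have : (∑ i, toR ℓ i * toR ℓ i) = t := by simp [ht, dot3]
    rw [this]
    field_simp
  have := divergence_integral_zero F (contDiff_mode _ _ _) (perField_mode _ _ _)
  rw [show (fun x => ∑ i, fderiv ℝ F x (Pi.single i 1) i)
      = fun x => Real.sin (dot3 (toR ℓ) x) from funext hdiv] at this
  · exact this

lemma integrableOn_box_of_continuous {E : Type*} [NormedAddCommGroup E] [NormedSpace ℝ E]
    {f : V3 → E} (hf : Continuous f) : MeasureTheory.IntegrableOn f Box3 := by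
  rw [box3_eq]
  exact hf.continuousOn.integrableOn_compact isCompact_Icc

lemma zeroMean_mode (ℓ : Fin 3 → ℤ) (a b : V3) (h : toR ℓ ≠ 0) :
    ZeroMean3 (mode ℓ a b) := by
  unfold ZeroMean3
  have hc : Continuous fun x => Real.cos (dot3 (toR ℓ) x) := by
    have := Real.continuous_cos.comp (dotCLM (toR ℓ)).continuous
    simpa [Function.comp_def] using this
  have hs : Continuous fun x => Real.sin (dot3 (toR ℓ) x) := by
    have := Real.continuous_sin.comp (dotCLM (toR ℓ)).continuous
    simpa [Function.comp_def] using this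
  have h1 : MeasureTheory.IntegrableOn (fun x => Real.cos (dot3 (toR ℓ) x) • a) Box3 :=
    integrableOn_box_of_continuous (hc.smul continuous_const)
  have h2 : MeasureTheory.IntegrableOn (fun x => Real.sin (dot3 (toR ℓ) x) • b) Box3 :=
    integrableOn_box_of_continuous (hs.smul continuous_const)
  have : (∫ x in Box3, mode ℓ a b x)
      = (∫ x in Box3, Real.cos (dot3 (toR ℓ) x) • a)
        + (∫ x in Box3, Real.sin (dot3 (toR ℓ) x) • b) := by
    rw [← MeasureTheory.integral_add h1 h2]
    rfl
  rw [this, integral_smul_const, integral_smul_const,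
    integral_cos_zero ℓ h, integral_sin_zero ℓ h]
  simp

end Helper
namespace Helper

lemma v3_zero_of_dot_self {v : V3} (h : dot3 v v = 0) : v = 0 := by
  by_contra hne
  exact absurd h (ne_of_gt (dot3_self_pos hne))

lemma measurableSet_box3 : MeasurableSet Box3 := by
  rw [box3_eq]; exact measurableSet_Icc

lemma exists_shift_mem_box3 (x : V3) : ∃ k : Fin 3 → ℤ, x + (2 * Real.pi) • toR k ∈ Box3 := by
  have hpi : (0 : ℝ) < 2 * Real.pi := by positivity
  refine ⟨fun i => ⌈-(x i) / (2 * Real.pi)⌉, ?_⟩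
  intro i _
  have hle : -(x i) / (2 * Real.pi) ≤ (⌈-(x i) / (2 * Real.pi)⌉ : ℝ) := Int.le_ceil _
  have hlt : (⌈-(x i) / (2 * Real.pi)⌉ : ℝ) < -(x i) / (2 * Real.pi) + 1 :=
    Int.ceil_lt_add_one _
  have hval : (x + (2 * Real.pi) • toR fun i => ⌈-(x i) / (2 * Real.pi)⌉) i
      = x i + (2 * Real.pi) * (⌈-(x i) / (2 * Real.pi)⌉ : ℝ) := by
    simp [toR]
  rw [hval]
  have h1 : -(x i) ≤ (⌈-(x i) / (2 * Real.pi)⌉ : ℝ) * (2 * Real.pi) := (div_le_iff₀ hpi).1 hle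
  have h2 : ((⌈-(x i) / (2 * Real.pi)⌉ : ℝ) - 1) * (2 * Real.pi) < -(x i) := by
    rw [← lt_div_iff₀ hpi]
    linarith
  constructor
  · nlinarith
  · nlinarith

/-- A continuous nonnegative periodic function with zero integral over the box vanishes. -/
lemma zero_of_per_nonneg_integral_zero (g : V3 → ℝ) (hg : Continuous g) (hper : PerFun g)
    (hnn : ∀ x, 0 ≤ g x) (hint : (∫ x in Box3, g x) = 0) : ∀ x, g x = 0 := by
  have hInt : MeasureTheory.IntegrableOn g Box3 := integrableOn_box_of_continuous hg
  have hae : ∀ᵐ x ∂(MeasureTheory.volume.restrict Box3), g x = 0 :=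
    (MeasureTheory.integral_eq_zero_iff_of_nonneg
      (fun x => hnn x) hInt).1 hint
  set N := {x : V3 | g x ≠ 0} with hN
  have hNopen : IsOpen N := IsOpen.preimage hg isOpen_ne
  have hNB : MeasureTheory.volume (N ∩ Box3) = 0 := by
    have h0 : (MeasureTheory.volume.restrict Box3) N = 0 := by
      have := MeasureTheory.ae_iff.mp hae
      simpa [hN] using this
    rwa [MeasureTheory.Measure.restrict_apply hNopen.measurableSet] at h0
  have hpiece : ∀ k : Fin 3 → ℤ,
      MeasureTheory.volume (N ∩ {x | x + (2 * Real.pi) • toR k ∈ Box3}) = 0 := by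
    intro k
    have hNinv : (fun x : V3 => x + (2 * Real.pi) • toR k) ⁻¹' N = N := by
      ext x
      simp only [hN, Set.mem_preimage, Set.mem_setOf_eq]
      rw [hper x k]
    have heq : N ∩ {x | x + (2 * Real.pi) • toR k ∈ Box3}
        = (fun x : V3 => x + (2 * Real.pi) • toR k) ⁻¹' (N ∩ Box3) := by
      rw [Set.preimage_inter, hNinv]
      rfl
    rw [heq, measure_preimage_add_right]
    exact hNB
  have hNzero : MeasureTheory.volume N = 0 := by
    have hsub : N ⊆ ⋃ k : Fin 3 → ℤ, N ∩ {x | x + (2 * Real.pi) • toR k ∈ Box3} := by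
      intro x hx
      obtain ⟨k, hk⟩ := exists_shift_mem_box3 x
      exact Set.mem_iUnion.2 ⟨k, hx, hk⟩
    exact MeasureTheory.measure_mono_null hsub (MeasureTheory.measure_iUnion_null hpiece)
  intro x
  by_contra hx
  have : 0 < MeasureTheory.volume N := hNopen.measure_pos _ ⟨x, hx⟩
  exact absurd hNzero (ne_of_gt this)

end Helper
namespace Helper

lemma isLeray_unique {u w₁ w₂ : V3 → V3} (h₁ : IsLeray u w₁) (h₂ : IsLeray u w₂) :
    w₁ = w₂ := by
  obtain ⟨⟨hw₁s, hw₁per, hw₁div, _⟩, p₁, hp₁s, hp₁per, hp₁⟩ := h₁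
  obtain ⟨⟨hw₂s, hw₂per, hw₂div, _⟩, p₂, hp₂s, hp₂per, hp₂⟩ := h₂
  have h1le : ((⊤:ℕ∞) : WithTop ℕ∞) ≠ 0 := by simp
  set d : V3 → V3 := fun x => w₂ x - w₁ x with hd
  set q : V3 → ℝ := fun x => p₁ x - p₂ x with hq
  have hds : ContDiff ℝ (⊤ : ℕ∞) d := hw₂s.sub hw₁s
  have hqs : ContDiff ℝ (⊤ : ℕ∞) q := hp₁s.sub hp₂s
  -- the gradient of q is d
  have hgrad : ∀ x (i : Fin 3), fderiv ℝ q x (Pi.single i 1) = d x i := by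
    intro x i
    have hfd : fderiv ℝ q x = fderiv ℝ p₁ x - fderiv ℝ p₂ x :=
      fderiv_fun_sub (hp₁s.differentiable h1le x) (hp₂s.differentiable h1le x)
    have e₁ : fderiv ℝ p₁ x (Pi.single i 1) = convTerm u x i - w₁ x i := by
      have := congrFun (hp₁ x) i
      simp only [Pi.sub_apply, grad3] at this
      exact this.symm
    have e₂ : fderiv ℝ p₂ x (Pi.single i 1) = convTerm u x i - w₂ x i := by
      have := congrFun (hp₂ x) i
      simp only [Pi.sub_apply, grad3] at this
      exact this.symm
    rw [hfd]
    simp only [ContinuousLinearMap.sub_apply, e₁, e₂, hd, Pi.sub_apply]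
    ring
  -- divergence of d vanishes
  have hddiv : ∀ x, (∑ i, fderiv ℝ d x (Pi.single i 1) i) = 0 := by
    intro x
    have hfd : fderiv ℝ d x = fderiv ℝ w₂ x - fderiv ℝ w₁ x :=
      fderiv_fun_sub (hw₂s.differentiable h1le x) (hw₁s.differentiable h1le x)
    rw [hfd]
    simp only [ContinuousLinearMap.sub_apply, Pi.sub_apply]
    rw [Finset.sum_sub_distrib, hw₂div x, hw₁div x, sub_zero]
  -- the field q • d and its divergence
  set F : V3 → V3 := fun x => q x • d x with hF
  have hFs : ContDiff ℝ (⊤ : ℕ∞) F := hqs.smul hds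
  have hFper : PerField F := by
    intro x k
    simp only [hF, hq, hd]
    rw [hp₁per x k, hp₂per x k, hw₁per x k, hw₂per x k]
  have hdiv : ∀ x, (∑ i, fderiv ℝ F x (Pi.single i 1) i) = dot3 (d x) (d x) := by
    intro x
    have hqd : HasFDerivAt q (fderiv ℝ q x) x := (hqs.differentiable h1le x).hasFDerivAt
    have hdd : HasFDerivAt d (fderiv ℝ d x) x := (hds.differentiable h1le x).hasFDerivAt
    have hFd : HasFDerivAt F (q x • fderiv ℝ d x + (fderiv ℝ q x).smulRight (d x)) x :=
      hqd.smul hdd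
    rw [hFd.fderiv]
    have : ∀ i : Fin 3,
        (q x • fderiv ℝ d x + (fderiv ℝ q x).smulRight (d x)) (Pi.single i 1) i
          = q x * (fderiv ℝ d x (Pi.single i 1) i) + d x i * d x i := by
      intro i
      simp only [ContinuousLinearMap.add_apply, ContinuousLinearMap.smul_apply,
        ContinuousLinearMap.smulRight_apply, Pi.add_apply, Pi.smul_apply, smul_eq_mul,
        hgrad x i]
      try ring
    simp only [this]
    rw [Finset.sum_add_distrib, ← Finset.mul_sum, hddiv x]
    simp [dot3]
  have hint : (∫ x in Box3, dot3 (d x) (d x)) = 0 := by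
    have := divergence_integral_zero F hFs hFper
    rw [show (fun x => ∑ i, fderiv ℝ F x (Pi.single i 1) i)
        = fun x => dot3 (d x) (d x) from funext hdiv] at this
    exact this
  have hgcont : Continuous fun x => dot3 (d x) (d x) := by
    apply continuous_finset_sum
    intro i _
    exact ((continuous_apply i).comp hds.continuous).mul
      ((continuous_apply i).comp hds.continuous)
  have hgper : PerFun fun x => dot3 (d x) (d x) := by
    intro x k
    have : d (x + (2 * Real.pi) • toR k) = d x := by
      simp only [hd]; rw [hw₁per x k, hw₂per x k]
    simp only [this]
  have hgnn : ∀ x, 0 ≤ dot3 (d x) (d x) :=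
    fun x => Finset.sum_nonneg fun i _ => mul_self_nonneg _
  have hzero := zero_of_per_nonneg_integral_zero _ hgcont hgper hgnn hint
  funext x
  have : d x = 0 := v3_zero_of_dot_self (hzero x)
  have := sub_eq_zero.1 (by simpa [hd] using this)
  exact this.symm

end Helper
namespace Helper

lemma grad3_smode (ℓ : Fin 3 → ℤ) (r s : ℝ) (x : V3) :
    grad3 (smode ℓ r s) x = fun i =>
      (r * (-Real.sin (dot3 (toR ℓ) x)) + s * Real.cos (dot3 (toR ℓ) x)) * toR ℓ i := by
  funext i
  unfold grad3
  rw [(hasFDerivAt_smode ℓ r s x).fderiv]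
  simp [dsmode, dot3_single]

/-- The packaged statement: `G` splits as a nice divergence-free part plus a gradient. -/
def SplitPack (K₁ : Set (Fin 3 → ℤ)) (G : V3 → V3) : Prop :=
  ∃ (w : V3 → V3) (p : V3 → ℝ), w ∈ EK K₁ ∧ ZeroMean3 w ∧ ContDiff ℝ (⊤ : ℕ∞) w ∧
    ContDiff ℝ (⊤ : ℕ∞) p ∧ PerFun p ∧ ∀ x, G x = w x + grad3 p x

lemma grad3_zero_fun (x : V3) : grad3 (fun _ => (0 : ℝ)) x = 0 := by
  funext i
  simp [grad3]

lemma zeroMean3_zero : ZeroMean3 (0 : V3 → V3) := by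
  simp [ZeroMean3]

lemma splitPack_zero (K₁ : Set (Fin 3 → ℤ)) : SplitPack K₁ (fun _ => 0) := by
  refine ⟨0, fun _ => 0, EK_zero K₁, zeroMean3_zero, contDiff_const, contDiff_const,
    fun x k => rfl, fun x => ?_⟩
  rw [grad3_zero_fun]
  simp

lemma splitPack_congr {K₁ : Set (Fin 3 → ℤ)} {G₁ G₂ : V3 → V3} (h : ∀ x, G₁ x = G₂ x)
    (hs : SplitPack K₁ G₁) : SplitPack K₁ G₂ := by
  obtain ⟨w, p, h1, h2, h3, h4, h5, h6⟩ := hs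
  exact ⟨w, p, h1, h2, h3, h4, h5, fun x => (h x).symm.trans (h6 x)⟩

lemma splitPack_add {K₁ : Set (Fin 3 → ℤ)} {G₁ G₂ : V3 → V3}
    (h₁ : SplitPack K₁ G₁) (h₂ : SplitPack K₁ G₂) :
    SplitPack K₁ (fun x => G₁ x + G₂ x) := by
  obtain ⟨w₁, p₁, hw₁, hz₁, hs₁, hps₁, hpp₁, he₁⟩ := h₁
  obtain ⟨w₂, p₂, hw₂, hz₂, hs₂, hps₂, hpp₂, he₂⟩ := h₂
  have h1le : ((⊤:ℕ∞) : WithTop ℕ∞) ≠ 0 := by simp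
  refine ⟨w₁ + w₂, p₁ + p₂, EK_add hw₁ hw₂, ?_, hs₁.add hs₂, hps₁.add hps₂, ?_, ?_⟩
  · unfold ZeroMean3 at *
    have i₁ : MeasureTheory.IntegrableOn w₁ Box3 := integrableOn_box_of_continuous hs₁.continuous
    have i₂ : MeasureTheory.IntegrableOn w₂ Box3 := integrableOn_box_of_continuous hs₂.continuous
    have : (∫ x in Box3, (w₁ + w₂) x) = (∫ x in Box3, w₁ x) + ∫ x in Box3, w₂ x := by
      rw [← MeasureTheory.integral_add i₁ i₂]
      rfl
    rw [this, hz₁, hz₂]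
    simp
  · intro x k
    simp only [Pi.add_apply]
    rw [hpp₁ x k, hpp₂ x k]
  · intro x
    have hgr : grad3 (p₁ + p₂) x = grad3 p₁ x + grad3 p₂ x := by
      funext i
      unfold grad3
      have hpe : (p₁ + p₂) = fun y => p₁ y + p₂ y := rfl
      rw [hpe, fderiv_fun_add (hps₁.differentiable h1le x) (hps₂.differentiable h1le x)]
      simp
    show G₁ x + G₂ x = (w₁ + w₂) x + grad3 (p₁ + p₂) x
    rw [hgr, he₁ x, he₂ x]
    simp only [Pi.add_apply]
    abel

lemma splitPack_sum {K₁ : Set (Fin 3 → ℤ)} {ι : Type*} (T : Finset ι) (G : ι → V3 → V3)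
    (h : ∀ i ∈ T, SplitPack K₁ (G i)) :
    SplitPack K₁ (fun x => ∑ i ∈ T, G i x) := by
  classical
  induction T using Finset.induction_on with
  | empty => exact splitPack_congr (fun x => by simp) (splitPack_zero K₁)
  | insert c T' ha ih =>
    have h₁ := h c (Finset.mem_insert_self c T')
    have h₂ := ih fun i hi => h i (Finset.mem_insert_of_mem hi)
    exact splitPack_congr (fun x => by rw [Finset.sum_insert ha]) (splitPack_add h₁ h₂)

/-- Splitting of a single mode into a divergence-free mode plus a gradient. -/
lemma splitPack_mode {K₁ : Set (Fin 3 → ℤ)} (ℓ : Fin 3 → ℤ) (c d : V3)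
    (h : (c = 0 ∧ d = 0) ∨ (ℓ ∈ K₁ ∧ toR ℓ ≠ 0)) :
    SplitPack K₁ (mode ℓ c d) := by
  rcases h with ⟨rfl, rfl⟩ | ⟨hℓ, h0⟩
  · exact splitPack_congr (fun x => by simp [mode]) (splitPack_zero K₁)
  · set t := dot3 (toR ℓ) (toR ℓ) with ht
    have htpos : 0 < t := dot3_self_pos h0
    set α := dot3 c (toR ℓ) / t with hα
    set β := dot3 d (toR ℓ) / t with hβ
    refine ⟨mode ℓ (c - α • toR ℓ) (d - β • toR ℓ), smode ℓ (-β) α, ?_, ?_, ?_, ?_, ?_, ?_⟩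
    · apply mode_mem_EK hℓ
      · rw [dot3_sub_left, dot3_smul_left, hα, ← ht]
        field_simp
        ring
      · rw [dot3_sub_left, dot3_smul_left, hβ, ← ht]
        field_simp
        ring
    · exact zeroMean_mode _ _ _ h0
    · exact contDiff_mode _ _ _
    · exact contDiff_smode _ _ _
    · exact perFun_smode _ _ _
    · intro x
      rw [grad3_smode]
      funext i
      simp only [mode, Pi.add_apply, Pi.smul_apply, Pi.sub_apply, smul_eq_mul]
      ring

end Helper
namespace Helper

/-- The interaction term of the pair `(m, n)`. -/
def Tpair (a b : (Fin 3 → ℤ) → V3) (m n : Fin 3 → ℤ) (x : V3) : V3 :=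
  (-Real.sin (dot3 (toR n) x) * (Real.cos (dot3 (toR m) x) * dot3 (a m) (toR n)
      + Real.sin (dot3 (toR m) x) * dot3 (b m) (toR n))) • a n
  + (Real.cos (dot3 (toR n) x) * (Real.cos (dot3 (toR m) x) * dot3 (a m) (toR n)
      + Real.sin (dot3 (toR m) x) * dot3 (b m) (toR n))) • b n

lemma dot3_sum_right {ι : Type*} (c : V3) (T : Finset ι) (f : ι → V3) :
    dot3 c (∑ i ∈ T, f i) = ∑ i ∈ T, dot3 c (f i) := by
  unfold dot3
  rw [Finset.sum_comm]
  apply Finset.sum_congr rfl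
  intro j _
  rw [Finset.sum_apply, Finset.mul_sum]

lemma convTerm_eksum (S : Finset (Fin 3 → ℤ)) (a b : (Fin 3 → ℤ) → V3) (x : V3) :
    convTerm (eksum S a b) x = ∑ n ∈ S, ∑ m ∈ S, Tpair a b m n x := by
  unfold convTerm
  rw [(hasFDerivAt_eksum S a b x).fderiv, ContinuousLinearMap.sum_apply]
  apply Finset.sum_congr rfl
  intro n _
  rw [dmode_apply]
  have hD : dot3 (toR n) (eksum S a b x)
      = ∑ m ∈ S, (Real.cos (dot3 (toR m) x) * dot3 (a m) (toR n)
          + Real.sin (dot3 (toR m) x) * dot3 (b m) (toR n)) := by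
    unfold eksum
    rw [dot3_sum_right]
    apply Finset.sum_congr rfl
    intro m _
    unfold mode
    rw [dot3_add_right, dot3_smul_right, dot3_smul_right, dot3_comm (toR n) (a m),
      dot3_comm (toR n) (b m)]
  rw [hD, Finset.mul_sum, Finset.mul_sum, Finset.sum_smul, Finset.sum_smul,
    ← Finset.sum_add_distrib]
  apply Finset.sum_congr rfl
  intro m _
  rfl
lemma tpair_eq (a b : (Fin 3 → ℤ) → V3) (m n : Fin 3 → ℤ) (x : V3) :
    Tpair a b m n x
      = mode (n + m) ((dot3 (a m) (toR n) / 2) • b n + (dot3 (b m) (toR n) / 2) • a n)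
          ((dot3 (b m) (toR n) / 2) • b n - (dot3 (a m) (toR n) / 2) • a n) x
        + mode (n - m) ((dot3 (a m) (toR n) / 2) • b n - (dot3 (b m) (toR n) / 2) • a n)
          (-((dot3 (a m) (toR n) / 2) • a n) - (dot3 (b m) (toR n) / 2) • b n) x := by
  have hadd : dot3 (toR (n + m)) x = dot3 (toR n) x + dot3 (toR m) x := by
    rw [toR_add, dot3_add_left]
  have hsub : dot3 (toR (n - m)) x = dot3 (toR n) x - dot3 (toR m) x := by
    rw [toR_sub, dot3_sub_left]
  funext i
  simp only [Tpair, mode, hadd, hsub, Real.cos_add, Real.sin_add, Real.cos_sub, Real.sin_sub,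
    Pi.add_apply, Pi.sub_apply, Pi.smul_apply, Pi.neg_apply, smul_eq_mul]
  ring

/-- Splitting of a single pair interaction term. -/
lemma pair_split {K : Set (Fin 3 → ℤ)} (a b : (Fin 3 → ℤ) → V3) (m n : Fin 3 → ℤ)
    (hm : m ∈ K) (hn : n ∈ K)
    (ham : dot3 (a m) (toR m) = 0) (hbm : dot3 (b m) (toR m) = 0) :
    SplitPack (K ∪ {x | ∃ m ∈ K, ∃ n ∈ K, NonParallel m n ∧ (x = m + n ∨ x = m - n)})
      (Tpair a b m n) := by
  set K₁ := K ∪ {x | ∃ m ∈ K, ∃ n ∈ K, NonParallel m n ∧ (x = m + n ∨ x = m - n)} with hK₁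
  have congr_helper : ∀ G₂ : V3 → V3, (∀ x, Tpair a b m n x = G₂ x) → SplitPack K₁ G₂ →
      SplitPack K₁ (Tpair a b m n) := by
    intro G₂ h hs
    exact splitPack_congr (fun x => (h x).symm) hs
  by_cases hpar : ∃ c : ℝ, toR n = c • toR m
  · -- parallel case: the term vanishes
    obtain ⟨c, hc⟩ := hpar
    have hA : dot3 (a m) (toR n) = 0 := by
      rw [hc, dot3_smul_right, ham, mul_zero]
    have hB : dot3 (b m) (toR n) = 0 := by
      rw [hc, dot3_smul_right, hbm, mul_zero]
    apply splitPack_congr (G₁ := fun _ => 0)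
    · intro x
      simp [Tpair, hA, hB]
    · exact splitPack_zero K₁
  · have hn0 : toR n ≠ 0 := fun h => hpar ⟨0, by rw [h, zero_smul]⟩
    refine congr_helper _ (fun x => tpair_eq a b m n x) ?_
    have hnK₁ : n ∈ K₁ := Set.mem_union_left _ hn
    by_cases hm0 : m = 0
    · -- `m = 0`: single frequency `n ∈ K`
      subst hm0
      apply splitPack_add
      · refine splitPack_mode _ _ _ (Or.inr ⟨?_, ?_⟩)
        · rw [add_zero]; exact hnK₁
        · rw [add_zero]; exact hn0
      · refine splitPack_mode _ _ _ (Or.inr ⟨?_, ?_⟩)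
        · rw [sub_zero]; exact hnK₁
        · rw [sub_zero]; exact hn0
    · -- non-parallel case
      have hm0' : toR m ≠ 0 := fun h => hm0 (toR_eq_zero h)
      have hpar' : ¬ ∃ c : ℝ, toR m = c • toR n := by
        rintro ⟨c, hc⟩
        have hc0 : c ≠ 0 := by
          rintro rfl
          rw [zero_smul] at hc
          exact hm0' hc
        exact hpar ⟨c⁻¹, by rw [hc, smul_smul, inv_mul_cancel₀ hc0, one_smul]⟩
      have hNP : NonParallel n m := ⟨hpar, hpar'⟩
      have hsum_mem : n + m ∈ K₁ := Set.mem_union_right _ ⟨n, hn, m, hm, hNP, Or.inl rfl⟩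
      have hdiff_mem : n - m ∈ K₁ := Set.mem_union_right _ ⟨n, hn, m, hm, hNP, Or.inr rfl⟩
      have hsum0 : toR (n + m) ≠ 0 := by
        intro h
        rw [toR_add] at h
        exact hpar ⟨-1, by rw [neg_one_smul]; exact eq_neg_of_add_eq_zero_left h⟩
      have hdiff0 : toR (n - m) ≠ 0 := by
        intro h
        rw [toR_sub, sub_eq_zero] at h
        exact hpar ⟨1, by rw [one_smul]; exact h⟩
      apply splitPack_add
      · exact splitPack_mode _ _ _ (Or.inr ⟨hsum_mem, hsum0⟩)
      · exact splitPack_mode _ _ _ (Or.inr ⟨hdiff_mem, hdiff0⟩)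
end Helper

open Helper


/-- With `K₁ := K ∪ {m ± n : m, n ∈ K non-parallel}`, one has
`B(ζ) ∈ E(K₁)` for every `ζ ∈ E(K)`. -/
theorem Bop_mem_EK1 (K : Set (Fin 3 → ℤ)) (hK : K.Finite) (ζ : V3 → V3) (hζ : ζ ∈ EK K) :
    Bop ζ ∈ EK (K ∪
      {x | ∃ m ∈ K, ∃ n ∈ K, NonParallel m n ∧ (x = m + n ∨ x = m - n)}) := by
  classical
  obtain ⟨S, a, b, hS, hab, hform⟩ := hζ
  have hze : ζ = eksum S a b := hform
  set K₁ := K ∪ {x | ∃ m ∈ K, ∃ n ∈ K, NonParallel m n ∧ (x = m + n ∨ x = m - n)} with hK₁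
  have hsp : SplitPack K₁ (fun x => ∑ n ∈ S, ∑ m ∈ S, Tpair a b m n x) := by
    apply splitPack_sum
    intro n hn
    apply splitPack_sum
    intro m hm
    exact pair_split a b m n (hS hm) (hS hn) (hab m hm).1 (hab m hm).2
  have hsp2 : SplitPack K₁ (convTerm ζ) := by
    apply splitPack_congr (G₁ := fun x => ∑ n ∈ S, ∑ m ∈ S, Tpair a b m n x) ?_ hsp
    intro x
    rw [hze]
    exact (convTerm_eksum S a b x).symm
  obtain ⟨w, p, hwEK, hwzm, hws, hps, hpper, heq⟩ := hsp2
  have hIs : IsLeray ζ w :=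
    ⟨⟨hws, EK_perField hwEK, EK_divFree hwEK, hwzm⟩, p, hps, hpper,
      fun x => by rw [heq x]; exact add_sub_cancel_left _ _⟩
  have hEx : ∃ w', IsLeray ζ w' := ⟨w, hIs⟩
  have hBop : Bop ζ = hEx.choose := by
    unfold Bop
    rw [dif_pos hEx]
  have huniq : hEx.choose = w := isLeray_unique hEx.choose_spec hIs
  rw [hBop, huniq]
  exact hwEK
end
end
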